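/- Let Ω be a finite probability space with weights w, let K ≥ 2, let h, h̃ : Ω → Fin K be random variables, let a ∈ Fin K, and let 0 < α < 1. Assume the biased model marginals P(h = a) = α and P(h = i) = (1 − α)/(K − 1) for every i ≠ a. Then Σ_{j ∈ Fin K} P(h̃ = j ∧ h = j)/P(h = j) = ((K − 1)/(1 − α)) · ( A* + ((1 − α)/(α(K − 1)) − 1) · P(h̃ = a ∧ h = a) ), where A* := P(h̃ = h). -/

import Mathlib

/-!
Since `A* = ∑ⱼ P(h̃ = j ∧ h = j)` and every class `j ≠ a` has the same marginal
`(1 − α)/(K − 1)`, the terms off `a` add up to `(K − 1)/(1 − α) · (A* − P(h̃ = a ∧ h = a))`;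
the `a`-term `P(h̃ = a ∧ h = a)/α` supplies the correction.
-/

open Classical in
/-- Probability of an event `E` on a finite probability space with weights `w`. -/
noncomputable def prob {Ω : Type*} [Fintype Ω] (w : Ω → ℝ) (E : Ω → Prop) : ℝ :=
  ∑ ω, if E ω then w ω else 0

open Finset

open Classical in
theorem prob_eq_eq_sum_prob_and {Ω ι : Type*} [Fintype Ω] [Fintype ι] (w : Ω → ℝ)
    (f g : Ω → ι) :
    prob w (fun ω => f ω = g ω) = ∑ j, prob w (fun ω => f ω = j ∧ g ω = j) := by
  unfold prob
  rw [sum_comm]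
  refine sum_congr rfl fun ω _ => ?_
  by_cases hfg : f ω = g ω
  · simp [hfg]
  · rw [if_neg hfg, sum_eq_zero]
    rintro j -
    exact if_neg fun ⟨hf, hg⟩ => hfg (hf.trans hg.symm)

theorem sum_div_eq_add_sum_sub_div {ι : Type*} [Fintype ι] [DecidableEq ι]
    (p q : ι → ℝ) (a : ι) (c : ℝ) (hq : ∀ i, i ≠ a → q i = c) :
    ∑ i, p i / q i = p a / q a + (∑ i, p i - p a) / c := by
  rw [← add_sum_erase _ _ (mem_univ a), ← add_sum_erase _ p (mem_univ a), add_sub_cancel_left,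
    sum_div]
  congr 1
  exact sum_congr rfl fun i hi => by rw [hq i (ne_of_mem_erase hi)]

theorem biased_classifier_diagonal_sum_general
    {Ω : Type*} [Fintype Ω] (w : Ω → ℝ)
    (K : ℕ) (hK : 2 ≤ K)
    (h ht : Ω → Fin K) (a : Fin K) (α : ℝ) (hα1 : α < 1)
    (hbias : prob w (fun ω => h ω = a) = α)
    (hunbias : ∀ i : Fin K, i ≠ a →
      prob w (fun ω => h ω = i) = (1 - α) / ((K : ℝ) - 1)) :
    ∑ j : Fin K,
        prob w (fun ω => ht ω = j ∧ h ω = j) / prob w (fun ω => h ω = j)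
      = (((K : ℝ) - 1) / (1 - α))
          * (prob w (fun ω => ht ω = h ω)
            + ((1 - α) / (α * ((K : ℝ) - 1)) - 1)
              * prob w (fun ω => ht ω = a ∧ h ω = a)) := by
  have hK1 : (K : ℝ) - 1 ≠ 0 := by
    have : (2 : ℝ) ≤ K := by exact_mod_cast hK
    linarith
  have hα : 1 - α ≠ 0 := by linarith
  rw [sum_div_eq_add_sum_sub_div _ _ a _ hunbias, ← prob_eq_eq_sum_prob_and, hbias]
  have hcancel : (K - 1 : ℝ) / (1 - α) * ((1 - α) / (α * (K - 1))) = α⁻¹ := by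
    rw [div_mul_div_comm, mul_comm α, ← mul_assoc, mul_comm ((K : ℝ) - 1)]
    exact div_mul_cancel_left₀ (mul_ne_zero hα hK1) α
  set A := prob w (fun ω => ht ω = h ω)
  set P := prob w (fun ω => ht ω = a ∧ h ω = a)
  calc P / α + (A - P) / ((1 - α) / (K - 1))
      = (K - 1) / (1 - α) * ((1 - α) / (α * (K - 1))) * P + (K - 1) / (1 - α) * (A - P) := by
        rw [hcancel, div_div_eq_mul_div]; ring
    _ = _ := by ring

/-- **Appendix B identity (biased classifier).** If the model marginals are biased
towards a single class `a`, with `P(h = a) = α` and `P(h = i) = (1 − α)/(K − 1)`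
for `i ≠ a`, then the sum of the diagonal conditional probabilities equals
`((K − 1)/(1 − α)) · (A* + ((1 − α)/(α(K − 1)) − 1) · P(h̃ = a ∧ h = a))`. -/
theorem biased_classifier_diagonal_sum
    {Ω : Type*} [Fintype Ω] (w : Ω → ℝ)
    (hw0 : ∀ ω, 0 ≤ w ω) (hw1 : ∑ ω, w ω = 1)
    (K : ℕ) (hK : 2 ≤ K)
    (h ht : Ω → Fin K) (a : Fin K) (α : ℝ) (hα0 : 0 < α) (hα1 : α < 1)
    (hbias : prob w (fun ω => h ω = a) = α)
    (hunbias : ∀ i : Fin K, i ≠ a →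
      prob w (fun ω => h ω = i) = (1 - α) / ((K : ℝ) - 1)) :
    ∑ j : Fin K,
        prob w (fun ω => ht ω = j ∧ h ω = j) / prob w (fun ω => h ω = j)
      = (((K : ℝ) - 1) / (1 - α))
          * (prob w (fun ω => ht ω = h ω)
            + ((1 - α) / (α * ((K : ℝ) - 1)) - 1)
              * prob w (fun ω => ht ω = a ∧ h ω = a)) :=
  biased_classifier_diagonal_sum_general w K hK h ht a α hα1 hbias hunbias
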